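/- Fix integers r ≥ 1 and m ≥ 1 and positive real numbers u_{i,j} for 1 ≤ i ≤ r+1 and 1 ≤ j ≤ m such that u_{1,j} ≥ u_{2,j} ≥ ⋯ ≥ u_{r+1,j} for every j, and u_{i,j} ≥ u_{i+1,j-1} for all 1 ≤ i ≤ r and 2 ≤ j ≤ m. Then equality (r+1)! · Σ_{1 ≤ j_1 ≤ ⋯ ≤ j_{r+1} ≤ m} ∏_{i=1}^{r+1} u_{i,j_i} = ∏_{k=0}^{r} ( Σ_{j=1}^{m-1} u_{1,j} + Σ_{i=1}^{k+1} u_{i,m} ) holds if and only if all the u_{i,j} are equal to one another. -/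

import Mathlib

/-!
Shift to 0-based indices, `v i j = u (i + 1) (j + 1)`. The hook sum `H k t` (`hookSum`) adds the
first row over the columns `< t` and column `t` over the rows `≤ k`, so the right-hand side is
`P (r + 1) (m - 1)` with `P n t = ∏_{k < n} H k t` (`hookProd`). The chain sum `T n t`
(`chainSum`) over `j₀ ≤ ⋯ ≤ j_{n-1} ≤ t` satisfies `T (n + 1) t = ∑_{s ≤ t} v n s * T n s`, and
building `P (n + 1)` column by column shows that the excess `E n t = P n t - n! * T n t` obeys
`E (n + 1) t = ∑_{s ≤ t} ((n + 1) v n s E n s + P n s * ∑_{i ≤ n} (v i s - v n s))`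
`            + ∑_{s < t} H 0 s * (P n (s + 1) - ∏_{k < n} H (k + 1) s)`.
The column condition makes the middle terms nonnegative and the diagonal condition gives
`H (k + 1) s ≤ H k (s + 1)`, so `E ≥ 0`: this is the upper bound. At equality every term with
`n = r` vanishes: each column is constant, and `H 1 s = H 0 (s + 1)`, i.e. `v 1 s = v 0 (s + 1)`,
ties consecutive columns together. For constant `v` every term vanishes.
-/

open Finset

theorem Fin.monotone_snoc {α : Type*} [Preorder α] {n : ℕ} {g : Fin n → α} {a : α}
    (hg : Monotone g) (ha : ∀ i, g i ≤ a) : Monotone (Fin.snoc g a : Fin (n + 1) → α) := by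
  intro i j hij
  induction j using Fin.lastCases with
  | last =>
    induction i using Fin.lastCases with
    | last => exact le_rfl
    | cast i => simpa using ha i
  | cast j =>
    induction i using Fin.lastCases with
    | last => exact absurd hij (Fin.castSucc_lt_last j).not_ge
    | cast i => simpa using hg (Fin.castSucc_le_castSucc_iff.1 hij)

theorem Finset.sum_Icc_one_eq_sum_range {M : Type*} [AddCommMonoid M] (f : ℕ → M) (n : ℕ) :
    ∑ i ∈ Icc 1 n, f i = ∑ i ∈ range n, f (i + 1) := by
  rw [← Ico_add_one_right_eq_Icc, sum_Ico_eq_sum_range]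
  simp [add_comm]

namespace MaximalMinors

noncomputable def hookSum (v : ℕ → ℕ → ℝ) (k t : ℕ) : ℝ :=
  ∑ j ∈ range t, v 0 j + ∑ i ∈ range (k + 1), v i t

noncomputable def hookProd (v : ℕ → ℕ → ℝ) (n t : ℕ) : ℝ :=
  ∏ k ∈ range n, hookSum v k t

open Classical in
noncomputable def chainSum (v : ℕ → ℕ → ℝ) (n t : ℕ) : ℝ :=
  ∑ f ∈ {f ∈ Fintype.piFinset fun _ : Fin n => range (t + 1) | Monotone f},
    ∏ i : Fin n, v i (f i)

lemma chainSum_zero (v : ℕ → ℕ → ℝ) (t : ℕ) : chainSum v 0 t = 1 := by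
  simp [chainSum, Subsingleton.monotone]

lemma chainSum_succ (v : ℕ → ℕ → ℝ) (n t : ℕ) :
    chainSum v (n + 1) t = ∑ s ∈ range (t + 1), v n s * chainSum v n s := by
  unfold chainSum
  rw [← sum_fiberwise_of_maps_to (g := fun f => f (Fin.last n)) (t := range (t + 1))
    fun f hf => by simp_all [Fintype.mem_piFinset]]
  refine sum_congr rfl fun s hs => ?_
  rw [mul_sum]
  refine sum_nbij' Fin.init (fun g => Fin.snoc g s) ?_ ?_ ?_ ?_ ?_
  · simp only [mem_filter, Fintype.mem_piFinset, mem_range]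
    rintro f ⟨⟨-, hf⟩, rfl⟩
    exact ⟨fun i => Nat.lt_succ_of_le (hf (Fin.le_last _)),
      hf.comp Fin.strictMono_castSucc.monotone⟩
  · simp only [mem_filter, Fintype.mem_piFinset, mem_range] at hs ⊢
    rintro g ⟨hgs, hg⟩
    refine ⟨⟨fun i => ?_, Fin.monotone_snoc hg fun i => Nat.le_of_lt_succ (hgs i)⟩, by simp⟩
    induction i using Fin.lastCases with
    | last => simpa using hs
    | cast i => simpa using (hgs i).trans_le hs
  · simp only [mem_filter]
    rintro f ⟨-, rfl⟩
    exact Fin.snoc_init_self f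
  · intro g _
    exact Fin.init_snoc _ _
  · simp only [mem_filter]
    rintro f ⟨-, rfl⟩
    rw [Fin.prod_univ_castSucc, mul_comm]
    rfl

lemma chainSum_eq_sum_filter_monotone (v : ℕ → ℕ → ℝ) (n t : ℕ)
    [DecidablePred fun f : Fin n → Fin (t + 1) => Monotone f] :
    chainSum v n t = ∑ f ∈ univ.filter (fun f : Fin n → Fin (t + 1) => Monotone f),
      ∏ i : Fin n, v i (f i) := by
  symm
  refine sum_bij' (fun f _ i => (f i : ℕ))
    (fun g hg i => ⟨g i, by
      simp only [mem_filter, Fintype.mem_piFinset, mem_range] at hg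
      exact hg.1 i⟩)
    ?_ ?_ (fun _ _ => rfl) (fun _ _ => rfl) (fun _ _ => rfl)
  · simp only [mem_filter, mem_univ, true_and, Fintype.mem_piFinset, mem_range]
    exact fun f hf => ⟨fun i => (f i).isLt, fun _ _ hab => hf hab⟩
  · simp only [mem_filter, mem_univ, true_and, Fintype.mem_piFinset, mem_range]
    exact fun g hg _ _ hab => hg.2 hab

noncomputable def columnGap (v : ℕ → ℕ → ℝ) (n s : ℕ) : ℝ :=
  ∑ i ∈ range (n + 1), (v i s - v n s)

noncomputable def diagonalGap (v : ℕ → ℕ → ℝ) (n s : ℕ) : ℝ :=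
  hookProd v n (s + 1) - ∏ k ∈ range n, hookSum v (k + 1) s

noncomputable def excess (v : ℕ → ℕ → ℝ) (n t : ℕ) : ℝ :=
  hookProd v n t - n.factorial * chainSum v n t

lemma hookSum_succ_right (v : ℕ → ℕ → ℝ) (k t : ℕ) :
    hookSum v k (t + 1) = hookSum v 0 t + ∑ i ∈ range (k + 1), v i (t + 1) := by
  simp [hookSum, sum_range_succ]

lemma hookSum_succ_right_sub_succ_left (v : ℕ → ℕ → ℝ) (k s : ℕ) :
    hookSum v k (s + 1) - hookSum v (k + 1) s =
      ∑ i ∈ range (k + 1), (v i (s + 1) - v (i + 1) s) := by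
  rw [hookSum_succ_right, hookSum, hookSum, sum_range_succ' (fun i => v i s) (k + 1),
    sum_sub_distrib, zero_add, sum_range_one]
  ring

lemma hookProd_succ (v : ℕ → ℕ → ℝ) (n s : ℕ) :
    hookProd v (n + 1) s = hookSum v 0 s * ∏ k ∈ range n, hookSum v (k + 1) s := by
  rw [hookProd, prod_range_succ', mul_comm]

lemma sum_column_eq_mul_add_columnGap (v : ℕ → ℕ → ℝ) (n s : ℕ) :
    ∑ i ∈ range (n + 1), v i s = (n + 1) * v n s + columnGap v n s := by
  simp [columnGap, sum_sub_distrib]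

lemma hookProd_succ_eq_sum (v : ℕ → ℕ → ℝ) (n t : ℕ) :
    hookProd v (n + 1) t = ∑ s ∈ range (t + 1), hookProd v n s * ∑ i ∈ range (n + 1), v i s
      + ∑ s ∈ range t, hookSum v 0 s * diagonalGap v n s := by
  induction t with
  | zero => simp [hookProd, prod_range_succ, hookSum]
  | succ t ih =>
    have hstep : hookSum v 0 t * diagonalGap v n t
        = hookSum v 0 t * hookProd v n (t + 1) - hookProd v (n + 1) t := by
      rw [diagonalGap, hookProd_succ]; ring
    rw [sum_range_succ _ (t + 1), sum_range_succ (fun s => _ * diagonalGap v n s), hstep,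
      hookProd, prod_range_succ, hookSum_succ_right, ← hookProd, ih]
    ring

lemma excess_succ (v : ℕ → ℕ → ℝ) (n t : ℕ) :
    excess v (n + 1) t = ∑ s ∈ range (t + 1),
        ((n + 1) * v n s * excess v n s + hookProd v n s * columnGap v n s)
      + ∑ s ∈ range t, hookSum v 0 s * diagonalGap v n s := by
  rw [excess, hookProd_succ_eq_sum, chainSum_succ, mul_sum, add_sub_right_comm, ← sum_sub_distrib]
  congr 1
  refine sum_congr rfl fun s _ => ?_
  rw [excess, sum_column_eq_mul_add_columnGap, Nat.factorial_succ]
  push_cast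
  ring

lemma excess_zero (v : ℕ → ℕ → ℝ) (t : ℕ) : excess v 0 t = 0 := by
  simp [excess, hookProd, chainSum_zero]

section Analysis

variable {v : ℕ → ℕ → ℝ} {r t : ℕ}
  (hpos : ∀ i j, i ≤ r → j ≤ t → 0 < v i j)
  (hcol : ∀ i j, i < r → j ≤ t → v (i + 1) j ≤ v i j)
  (hdiag : ∀ i j, i < r → j < t → v (i + 1) j ≤ v i (j + 1))

include hcol in
lemma column_le_of_le {s : ℕ} (hs : s ≤ t) {i k : ℕ} (hik : i ≤ k) (hk : k ≤ r) :
    v k s ≤ v i s := by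
  induction k, hik using Nat.le_induction with
  | base => exact le_rfl
  | succ k hik ih => exact (hcol k s (by omega) hs).trans (ih (by omega))

include hpos in
lemma hookSum_pos {k s : ℕ} (hk : k ≤ r) (hs : s ≤ t) : 0 < hookSum v k s := by
  refine add_pos_of_nonneg_of_pos (sum_nonneg fun j hj => ?_)
    (sum_pos (fun i hi => ?_) nonempty_range_add_one)
  · exact (hpos 0 j (Nat.zero_le r) (by simp at hj; omega)).le
  · exact hpos i s (by simp at hi; omega) hs

include hpos in
lemma hookProd_pos {n s : ℕ} (hn : n ≤ r + 1) (hs : s ≤ t) : 0 < hookProd v n s :=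
  prod_pos fun k hk => hookSum_pos hpos (by simp at hk; omega) hs

include hcol in
lemma columnGap_nonneg {n s : ℕ} (hn : n ≤ r) (hs : s ≤ t) : 0 ≤ columnGap v n s :=
  sum_nonneg fun i hi => sub_nonneg.2 (column_le_of_le hcol hs (by simp at hi; omega) hn)

include hdiag in
lemma hookSum_succ_le {k s : ℕ} (hk : k < r) (hs : s < t) :
    hookSum v (k + 1) s ≤ hookSum v k (s + 1) := by
  rw [← sub_nonneg, hookSum_succ_right_sub_succ_left]
  exact sum_nonneg fun i hi => sub_nonneg.2 (hdiag i s (by simp at hi; omega) hs)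

include hpos hdiag in
lemma diagonalGap_nonneg {n s : ℕ} (hn : n ≤ r) (hs : s < t) : 0 ≤ diagonalGap v n s := by
  refine sub_nonneg.2 (prod_le_prod (fun k hk => (hookSum_pos hpos ?_ hs.le).le)
    fun k hk => hookSum_succ_le hdiag ?_ hs) <;> simp at hk <;> omega

include hpos hcol hdiag in
lemma excess_nonneg {n s : ℕ} (hn : n ≤ r + 1) (hs : s ≤ t) : 0 ≤ excess v n s := by
  induction n generalizing s with
  | zero => rw [excess_zero]
  | succ n ih =>
    rw [excess_succ]
    refine add_nonneg (sum_nonneg fun s' hs' => add_nonneg ?_ ?_) (sum_nonneg fun s' hs' => ?_) <;>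
      simp only [mem_range] at hs'
    · exact mul_nonneg (mul_nonneg (by positivity) (hpos n s' (by omega) (by omega)).le)
        (ih (by omega) (by omega))
    · exact mul_nonneg (hookProd_pos hpos (by omega) (by omega)).le
        (columnGap_nonneg hcol (by omega) (by omega))
    · exact mul_nonneg (hookSum_pos hpos (Nat.zero_le r) (by omega)).le
        (diagonalGap_nonneg hpos hdiag (by omega) (by omega))

include hpos hcol hdiag in
lemma gaps_eq_zero_of_excess_eq_zero {n : ℕ} (hn : n ≤ r) (h : excess v (n + 1) t = 0) :
    (∀ s ≤ t, columnGap v n s = 0) ∧ ∀ s < t, diagonalGap v n s = 0 := by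
  have hX : ∀ s ∈ range (t + 1), 0 ≤ (n + 1) * v n s * excess v n s :=
    fun s hs => mul_nonneg (mul_nonneg (by positivity) (hpos n s hn (by simp at hs; omega)).le)
      (excess_nonneg hpos hcol hdiag (by omega) (by simp at hs; omega))
  have hY : ∀ s ∈ range (t + 1), 0 ≤ hookProd v n s * columnGap v n s :=
    fun s hs => mul_nonneg (hookProd_pos hpos (by omega) (by simp at hs; omega)).le
      (columnGap_nonneg hcol hn (by simp at hs; omega))
  have hZ : ∀ s ∈ range t, 0 ≤ hookSum v 0 s * diagonalGap v n s :=
    fun s hs => mul_nonneg (hookSum_pos hpos (Nat.zero_le r) (by simp at hs; omega)).le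
      (diagonalGap_nonneg hpos hdiag hn (by simpa using hs))
  rw [excess_succ] at h
  obtain ⟨hXY, hZ0⟩ := (add_eq_zero_iff_of_nonneg
    (sum_nonneg fun s hs => add_nonneg (hX s hs) (hY s hs)) (sum_nonneg hZ)).1 h
  rw [sum_eq_zero_iff_of_nonneg fun s hs => add_nonneg (hX s hs) (hY s hs)] at hXY
  rw [sum_eq_zero_iff_of_nonneg hZ] at hZ0
  refine ⟨fun s hs => ?_, fun s hs => ?_⟩
  · have hs' : s ∈ range (t + 1) := by simp; omega
    have := ((add_eq_zero_iff_of_nonneg (hX s hs') (hY s hs')).1 (hXY s hs')).2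
    exact (mul_eq_zero.1 this).resolve_left (hookProd_pos hpos (by omega) hs).ne'
  · exact (mul_eq_zero.1 (hZ0 s (by simpa using hs))).resolve_left
      (hookSum_pos hpos (Nat.zero_le r) hs.le).ne'

include hcol in
lemma column_eq_of_columnGap_eq_zero {s : ℕ} (hs : s ≤ t) (h : columnGap v r s = 0) {i : ℕ}
    (hi : i ≤ r) : v i s = v r s := by
  rw [columnGap, sum_eq_zero_iff_of_nonneg
    fun i hi => sub_nonneg.2 (column_le_of_le hcol hs (by simp at hi; omega) le_rfl)] at h
  exact sub_eq_zero.1 (h i (by simp; omega))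

include hpos hdiag in
lemma eq_of_diagonalGap_eq_zero (hr : 0 < r) {s : ℕ} (hs : s < t) (h : diagonalGap v r s = 0) :
    v 1 s = v 0 (s + 1) := by
  have hhook : hookSum v 1 s = hookSum v 0 (s + 1) := by
    by_contra hne
    refine (prod_lt_prod (f := fun k => hookSum v (k + 1) s) (g := fun k => hookSum v k (s + 1))
      (fun k hk => hookSum_pos hpos ?_ hs.le)
      (fun k hk => hookSum_succ_le hdiag ?_ hs)
      ⟨0, mem_range.2 hr, (hookSum_succ_le hdiag hr hs).lt_of_ne hne⟩).ne ?_
    · simp at hk; omega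
    · simp at hk; omega
    · rw [diagonalGap, sub_eq_zero] at h
      exact h.symm
  have := hookSum_succ_right_sub_succ_left v 0 s
  rw [hhook, sub_self, sum_range_one] at this
  linarith

include hpos hcol hdiag in
lemma eq_of_excess_eq_zero (hr : 0 < r) (h : excess v (r + 1) t = 0) {i j : ℕ} (hi : i ≤ r)
    (hj : j ≤ t) : v i j = v 0 0 := by
  obtain ⟨hcolumnGap, hdiagonalGap⟩ := gaps_eq_zero_of_excess_eq_zero hpos hcol hdiag le_rfl h
  have hcolumn : ∀ i s, i ≤ r → s ≤ t → v i s = v 0 s := fun i s hi hs =>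
    (column_eq_of_columnGap_eq_zero hcol hs (hcolumnGap s hs) hi).trans
      (column_eq_of_columnGap_eq_zero hcol hs (hcolumnGap s hs) (Nat.zero_le r)).symm
  have hrow : ∀ s ≤ t, v 0 s = v 0 0 := by
    intro s hs
    induction s with
    | zero => rfl
    | succ s ih =>
      rw [← eq_of_diagonalGap_eq_zero hpos hdiag hr hs (hdiagonalGap s hs),
        hcolumn 1 s hr (by omega), ih (by omega)]
  rw [hcolumn i j hi hj, hrow j hj]

lemma excess_eq_zero_of_const (hconst : ∀ i j, i ≤ r → j ≤ t → v i j = v 0 0) {n s : ℕ}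
    (hn : n ≤ r + 1) (hs : s ≤ t) : excess v n s = 0 := by
  induction n generalizing s with
  | zero => exact excess_zero v s
  | succ n ih =>
    have hcolumnGap : ∀ s ≤ t, columnGap v n s = 0 := fun s hs =>
      sum_eq_zero fun i hi => by
        rw [hconst i s (by simp at hi; omega) hs, hconst n s (by omega) hs, sub_self]
    have hdiagonalGap : ∀ s < t, diagonalGap v n s = 0 := fun s hs => by
      rw [diagonalGap, hookProd, sub_eq_zero]
      refine prod_congr rfl fun k hk => ?_
      rw [← sub_eq_zero, hookSum_succ_right_sub_succ_left]
      refine sum_eq_zero fun i hi => ?_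
      simp only [mem_range] at hk hi
      rw [hconst i (s + 1) (by omega) hs, hconst (i + 1) s (by omega) hs.le, sub_self]
    rw [excess_succ, sum_eq_zero fun s' hs' => ?_, sum_eq_zero fun s' hs' => ?_, add_zero] <;>
      simp only [mem_range] at hs'
    · rw [hdiagonalGap s' (by omega), mul_zero]
    · rw [ih (by omega) (by omega), hcolumnGap s' (by omega), mul_zero, mul_zero, add_zero]

include hpos hcol hdiag in
theorem factorial_mul_chainSum_eq_hookProd_iff (hr : 0 < r) :
    (r + 1).factorial * chainSum v (r + 1) t = hookProd v (r + 1) t ↔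
      ∀ i j, i ≤ r → j ≤ t → v i j = v 0 0 := by
  rw [eq_comm, ← sub_eq_zero]
  exact ⟨fun h i j hi hj => eq_of_excess_eq_zero hpos hcol hdiag hr h hi hj,
    fun hconst => excess_eq_zero_of_const hconst le_rfl le_rfl⟩

end Analysis

end MaximalMinors

open Classical in
/-- Equality analysis for the upper bound in the maximal-minors theorem:
for `r ≥ 1`, `m ≥ 1` and positive reals `u i j` (`1 ≤ i ≤ r+1`, `1 ≤ j ≤ m`)
decreasing down each column and with `u i j ≥ u (i+1) (j-1)`, equality
`(r+1)! · Σ_{1 ≤ j₁ ≤ ⋯ ≤ j_{r+1} ≤ m} ∏ᵢ u i jᵢ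
  = ∏_{k=0}^{r} (Σ_{j=1}^{m-1} u 1 j + Σ_{i=1}^{k+1} u i m)`
holds if and only if all the `u i j` are equal to one another. -/
theorem maximal_minors_upper_bound_equality (r m : ℕ) (hr : 1 ≤ r) (hm : 1 ≤ m)
    (u : ℕ → ℕ → ℝ)
    (hpos : ∀ i j, 1 ≤ i → i ≤ r + 1 → 1 ≤ j → j ≤ m → 0 < u i j)
    (hcol : ∀ i j, 1 ≤ i → i ≤ r → 1 ≤ j → j ≤ m → u (i + 1) j ≤ u i j)
    (hdiag : ∀ i j, 1 ≤ i → i ≤ r → 2 ≤ j → j ≤ m → u (i + 1) (j - 1) ≤ u i j) :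
    ((r + 1).factorial : ℝ) *
        ∑ f ∈ Finset.univ.filter (fun f : Fin (r + 1) → Fin m => Monotone f),
          ∏ i : Fin (r + 1), u ((i : ℕ) + 1) ((f i : ℕ) + 1) =
      ∏ k ∈ Finset.range (r + 1),
        ((∑ j ∈ Finset.Icc 1 (m - 1), u 1 j) + ∑ i ∈ Finset.Icc 1 (k + 1), u i m) ↔
    ∀ i j i' j', 1 ≤ i → i ≤ r + 1 → 1 ≤ j → j ≤ m →
      1 ≤ i' → i' ≤ r + 1 → 1 ≤ j' → j' ≤ m → u i j = u i' j' := by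
  obtain ⟨t, rfl⟩ : ∃ t, m = t + 1 := ⟨m - 1, by omega⟩
  set v : ℕ → ℕ → ℝ := fun i j => u (i + 1) (j + 1)
  have hbound : ∏ k ∈ range (r + 1), ((∑ j ∈ Icc 1 (t + 1 - 1), u 1 j)
      + ∑ i ∈ Icc 1 (k + 1), u i (t + 1)) = MaximalMinors.hookProd v (r + 1) t := by
    simp only [MaximalMinors.hookProd, MaximalMinors.hookSum, Nat.add_sub_cancel,
      sum_Icc_one_eq_sum_range, v]
  rw [← MaximalMinors.chainSum_eq_sum_filter_monotone v, hbound,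
    MaximalMinors.factorial_mul_chainSum_eq_hookProd_iff
      (fun i j hi hj => hpos _ _ (by omega) (by omega) (by omega) (by omega))
      (fun i j hi hj => hcol _ _ (by omega) (by omega) (by omega) (by omega))
      (fun i j hi hj => hdiag (i + 1) (j + 2) (by omega) (by omega) (by omega) (by omega)) hr]
  constructor
  · intro hconst i j i' j' hi hir hj hjm hi' hi'r hj' hj'm
    obtain ⟨a, rfl⟩ : ∃ a, i = a + 1 := ⟨i - 1, by omega⟩
    obtain ⟨b, rfl⟩ : ∃ b, j = b + 1 := ⟨j - 1, by omega⟩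
    obtain ⟨a', rfl⟩ : ∃ a', i' = a' + 1 := ⟨i' - 1, by omega⟩
    obtain ⟨b', rfl⟩ : ∃ b', j' = b' + 1 := ⟨j' - 1, by omega⟩
    exact (hconst a b (by omega) (by omega)).trans (hconst a' b' (by omega) (by omega)).symm
  · intro hall i j hi hj
    exact hall _ _ _ _ (by omega) (by omega) (by omega) (by omega) le_rfl (by omega) le_rfl
      (by omega)
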